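/- Let α and β be types and p : α → β → Prop a decidable join predicate. For bag relations f : α →₀ ℕ and g : β →₀ ℕ, define: the inner join inj(f, g) : α × β →₀ ℕ by inj(f, g)(a, b) = f a * g b if p a b, else 0; the left anti-join la(f, g) : α →₀ ℕ by la(f, g)(a) = f a if no b in the support of g satisfies p a b, else 0; and the left outer join lo(f, g) : α × Option β →₀ ℕ by lo(f, g)(a, some b) = inj(f, g)(a, b) and lo(f, g)(a, none) = la(f, g)(a). Then lo(f, g) equals the sum of the image of inj(f, g) under the (injective) map (a, b) ↦ (a, some b) and the image of la(f, g) under the (injective) map a ↦ (a, none); i.e., the left outer join decomposes as the inner join plus the null-padded left anti-join. -/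

import Mathlib

/-- Inner join of two bag relations with natural-number multiplicities:
the multiplicity of `(a, b)` is `f a * g b` when `p a b` holds, else `0`. -/
noncomputable def innerJoin {α β : Type*} (p : α → β → Prop) [∀ a b, Decidable (p a b)]
    (f : α →₀ ℕ) (g : β →₀ ℕ) : α × β →₀ ℕ :=
  Finsupp.onFinset (f.support ×ˢ g.support)
    (fun ab => if p ab.1 ab.2 then f ab.1 * g ab.2 else 0)
    (fun ab hab => by
      rw [Finset.mem_product]
      simp only [Finsupp.mem_support_iff]
      try dsimp only at hab
      split_ifs at hab with h
      · exact mul_ne_zero_iff.mp hab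
      · exact absurd rfl hab)

/-- Left anti-join of two bag relations: a left tuple `a` keeps its
multiplicity `f a` if no `b` in the support of `g` satisfies `p a b`,
and gets multiplicity `0` otherwise. -/
noncomputable def leftAntiJoin {α β : Type*} (p : α → β → Prop) [∀ a b, Decidable (p a b)]
    (f : α →₀ ℕ) (g : β →₀ ℕ) : α →₀ ℕ :=
  Finsupp.onFinset f.support
    (fun a => if ∃ b ∈ g.support, p a b then 0 else f a)
    (fun a ha => by
      simp only [Finsupp.mem_support_iff]
      try dsimp only at ha
      split_ifs at ha with h
      · exact absurd rfl ha
      · exact ha)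

/-- Left outer join of two bag relations: matched pairs `(a, some b)` carry the
inner-join multiplicity, and the null-padded row `(a, none)` carries the
left anti-join multiplicity. -/
noncomputable def leftOuterJoin {α β : Type*} (p : α → β → Prop) [∀ a b, Decidable (p a b)]
    (f : α →₀ ℕ) (g : β →₀ ℕ) : α × Option β →₀ ℕ :=
  letI : DecidableEq (Option β) := Classical.decEq _
  Finsupp.onFinset (f.support ×ˢ insert none (g.support.image some))
    (fun x =>
      match x with
      | (a, some b) => if p a b then f a * g b else 0
      | (a, none) => if ∃ b ∈ g.support, p a b then 0 else f a)
    (fun x hx => by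
      rw [Finset.mem_product]
      obtain ⟨a, b⟩ := x
      cases b with
      | none =>
        refine ⟨?_, Finset.mem_insert_self _ _⟩
        simp only [Finsupp.mem_support_iff]
        intro h
        apply hx
        simp [h]
      | some b =>
        constructor
        · simp only [Finsupp.mem_support_iff]
          intro h
          apply hx
          simp [h]
        · apply Finset.mem_insert_of_mem
          rw [Finset.mem_image]
          refine ⟨b, ?_, rfl⟩
          simp only [Finsupp.mem_support_iff]
          intro h
          apply hx
          simp [h])

open Function

theorem Finsupp.eq_embDomain_prodMap_some_add_embDomain_sectL_none {α β M : Type*}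
    [AddZeroClass M] {F : α × Option β →₀ M} {u : α × β →₀ M} {v : α →₀ M}
    (hsome : ∀ a b, F (a, Option.some b) = u (a, b)) (hnone : ∀ a, F (a, none) = v a) :
    F = embDomain ((Embedding.refl α).prodMap .some) u + embDomain (Embedding.sectL α none) v := by
  ext ⟨a, _ | b⟩
  · have hnot : (a, (none : Option β)) ∉ Set.range ((Embedding.refl α).prodMap .some) := by
      rintro ⟨⟨_, _⟩, h⟩
      simp at h
    rw [add_apply, embDomain_of_notMem_range _ _ _ hnot, zero_add, hnone]
    exact (embDomain_apply_self (Embedding.sectL α none) v a).symm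
  · have hnot : (a, Option.some b) ∉ Set.range (Embedding.sectL α (none : Option β)) := by
      rintro ⟨_, h⟩
      simp at h
    rw [add_apply, embDomain_of_notMem_range _ _ _ hnot, add_zero, hsome]
    exact (embDomain_apply_self ((Embedding.refl α).prodMap .some) u (a, b)).symm

section

variable {α β : Type*} (p : α → β → Prop) [∀ a b, Decidable (p a b)] (f : α →₀ ℕ) (g : β →₀ ℕ)

theorem leftOuterJoin_apply_some (a : α) (b : β) :
    leftOuterJoin p f g (a, some b) = innerJoin p f g (a, b) :=
  rfl

theorem leftOuterJoin_apply_none (a : α) :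
    leftOuterJoin p f g (a, none) = leftAntiJoin p f g a :=
  rfl

end

/-- The inter-TVR rule of the IM-2 (stream-computing) method: the left outer
join decomposes as the inner join (embedded via `(a, b) ↦ (a, some b)`) plus
the null-padded left anti-join (embedded via `a ↦ (a, none)`). -/
theorem leftOuterJoin_eq_innerJoin_add_leftAntiJoin {α β : Type*}
    (p : α → β → Prop) [∀ a b, Decidable (p a b)] (f : α →₀ ℕ) (g : β →₀ ℕ) :
    leftOuterJoin p f g =
      Finsupp.embDomain
        ⟨fun ab : α × β => (ab.1, some ab.2),
          fun ab ab' h => by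
            cases ab; cases ab'
            simpa [Prod.ext_iff] using h⟩ (innerJoin p f g) +
      Finsupp.embDomain
        ⟨fun a : α => (a, (none : Option β)),
          fun a a' h => by simpa [Prod.ext_iff] using h⟩ (leftAntiJoin p f g) := by
  exact Finsupp.eq_embDomain_prodMap_some_add_embDomain_sectL_none
    (leftOuterJoin_apply_some p f g) (leftOuterJoin_apply_none p f g)
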